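/- arXiv:2211.13386 — 7 statements merged into one kernel-verified Lean document; each statement's English description precedes it below -/
import Mathlib

section
/- Fix integers n ≥ 1, d ≥ 1, k ≥ 1, points x_1,…,x_n, y_1,…,y_n ∈ ℝ^d, and vectors α, β ∈ ℝ^n. Then the function U ↦ max_{i,j ∈ [n]} { −(α_i + β_j + ‖U^T(x_i − y_j)‖²) } + ‖C‖_∞ ‖U‖_F² is convex on ℝ^{d×k}, where C ∈ ℝ^{n×n} has entries C_ij = ‖x_i − y_j‖² and ‖C‖_∞ = max_{i,j} |C_ij|. (Equivalently, the dual objective h(α,β,U) = r^Tα + c^Tβ + max_{i,j}{−φ_ij(α,β,U)} is ‖C‖_∞-weakly convex in U.) -/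
open scoped BigOperators
open Matrix

noncomputable section

namespace PRWPaper

/-- Squared Euclidean norm of a vector in `ℝ^d`. -/
def sqnorm {d : ℕ} (v : Fin d → ℝ) : ℝ := ∑ l, (v l) ^ 2

/-- `‖Uᵀ w‖²  = ⟨w wᵀ, U Uᵀ⟩` for `U ∈ ℝ^{d×k}`, `w ∈ ℝ^d`. -/
def projSq {d k : ℕ} (U : Matrix (Fin d) (Fin k) ℝ) (w : Fin d → ℝ) : ℝ :=
  ∑ m, (∑ l, U l m * w l) ^ 2

/-- `C_ij = ‖x_i - y_j‖²`. -/
def costC {n d : ℕ} (x y : Fin n → Fin d → ℝ) (i j : Fin n) : ℝ :=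
  sqnorm (fun l => x i l - y j l)

/-- `[C(U)]_ij = ‖Uᵀ (x_i - y_j)‖² = ⟨M_ij, U Uᵀ⟩`. -/
def costCU {n d k : ℕ} (x y : Fin n → Fin d → ℝ) (U : Matrix (Fin d) (Fin k) ℝ)
    (i j : Fin n) : ℝ :=
  projSq U (fun l => x i l - y j l)

/-- `‖C‖_∞ = max_{i,j} |C_ij|`. -/
def CInf {n d : ℕ} (x y : Fin n → Fin d → ℝ) : ℝ :=
  ⨆ p : Fin n × Fin n, |costC x y p.1 p.2|

/-- `φ_ij(α, β, U) = α_i + β_j + ⟨M_ij, U Uᵀ⟩`. -/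
def phi {n d k : ℕ} (x y : Fin n → Fin d → ℝ) (α β : Fin n → ℝ)
    (U : Matrix (Fin d) (Fin k) ℝ) (i j : Fin n) : ℝ :=
  α i + β j + costCU x y U i j

/-- `min_{i,j} φ_ij(α, β, U)`. -/
def phiMin {n d k : ℕ} (x y : Fin n → Fin d → ℝ) (α β : Fin n → ℝ)
    (U : Matrix (Fin d) (Fin k) ℝ) : ℝ :=
  ⨅ p : Fin n × Fin n, phi x y α β U p.1 p.2

/-- Membership in the (relatively open) simplex `Δ^n`. -/
def inSimplex {n : ℕ} (r : Fin n → ℝ) : Prop :=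
  (∑ i, r i) = 1 ∧ ∀ i, 0 < r i

/-- Membership in the transportation polytope `Π(r, c)`. -/
def inPlans {n : ℕ} (r c : Fin n → ℝ) (π : Matrix (Fin n) (Fin n) ℝ) : Prop :=
  (∀ i, ∑ j, π i j = r i) ∧ (∀ j, ∑ i, π i j = c j) ∧ ∀ i j, 0 ≤ π i j

/-- `ℓ₁` norm of a matrix. -/
def l1norm {n : ℕ} (A : Matrix (Fin n) (Fin n) ℝ) : ℝ := ∑ i, ∑ j, |A i j|

/-- `ζ_η(x, κ)_ij = κ_ij exp(-φ_ij(x)/η)`. -/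
def zeta {n d k : ℕ} (η : ℝ) (κ : Matrix (Fin n) (Fin n) ℝ) (x y : Fin n → Fin d → ℝ)
    (α β : Fin n → ℝ) (U : Matrix (Fin d) (Fin k) ℝ) : Matrix (Fin n) (Fin n) ℝ :=
  fun i j => κ i j * Real.exp (-(phi x y α β U i j) / η)

/-- `L_η((α,β,U), κ) = rᵀα + cᵀβ + η log ‖ζ_η((α,β,U),κ)‖₁`. -/
def Lfun {n d k : ℕ} (η : ℝ) (κ : Matrix (Fin n) (Fin n) ℝ) (r c : Fin n → ℝ)
    (x y : Fin n → Fin d → ℝ) (α β : Fin n → ℝ) (U : Matrix (Fin d) (Fin k) ℝ) : ℝ :=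
  (∑ i, r i * α i) + (∑ j, c j * β j) + η * Real.log (l1norm (zeta η κ x y α β U))

/-- `π_η(x, κ) = ζ_η(x,κ)/‖ζ_η(x,κ)‖₁`. -/
def piEta {n d k : ℕ} (η : ℝ) (κ : Matrix (Fin n) (Fin n) ℝ) (x y : Fin n → Fin d → ℝ)
    (α β : Fin n → ℝ) (U : Matrix (Fin d) (Fin k) ℝ) : Matrix (Fin n) (Fin n) ℝ :=
  fun i j => zeta η κ x y α β U i j / l1norm (zeta η κ x y α β U)

/-- Entropy `H(π) = -Σ_ij π_ij log π_ij` (with the convention `0 log 0 = 0`,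
which holds since `Real.log 0 = 0`). -/
def entropy {n : ℕ} (π : Matrix (Fin n) (Fin n) ℝ) : ℝ :=
  -∑ i, ∑ j, π i j * Real.log (π i j)

/-- `h(π, U) = ⟨C(U) - η log κ, π⟩ - η H(π)`. -/
def hObj {n d k : ℕ} (η : ℝ) (κ : Matrix (Fin n) (Fin n) ℝ) (x y : Fin n → Fin d → ℝ)
    (U : Matrix (Fin d) (Fin k) ℝ) (π : Matrix (Fin n) (Fin n) ℝ) : ℝ :=
  (∑ i, ∑ j, (costCU x y U i j - η * Real.log (κ i j)) * π i j) - η * entropy π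

/-- `‖π 1 - r‖₁`, the row-sum feasibility residual. -/
def rowRes {n : ℕ} (r : Fin n → ℝ) (π : Matrix (Fin n) (Fin n) ℝ) : ℝ :=
  ∑ i, |(∑ j, π i j) - r i|

/-- `‖πᵀ 1 - c‖₁`, the column-sum feasibility residual. -/
def colRes {n : ℕ} (c : Fin n → ℝ) (π : Matrix (Fin n) (Fin n) ℝ) : ℝ :=
  ∑ j, |(∑ i, π i j) - c j|

/-- Variation seminorm `‖v‖_var = max_i v_i - min_i v_i` of a vector. -/
def varVec {n : ℕ} (v : Fin n → ℝ) : ℝ := (⨆ i, v i) - (⨅ i, v i)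

/-- `‖log κ‖_var = max_{ij} log κ_ij - min_{ij} log κ_ij`. -/
def varLog {n : ℕ} (κ : Matrix (Fin n) (Fin n) ℝ) : ℝ :=
  (⨆ p : Fin n × Fin n, Real.log (κ p.1 p.2)) - (⨅ p : Fin n × Fin n, Real.log (κ p.1 p.2))

/-- `‖log κ‖_∞ = max_{ij} |log κ_ij|`. -/
def logInf {n : ℕ} (κ : Matrix (Fin n) (Fin n) ℝ) : ℝ :=
  ⨆ p : Fin n × Fin n, |Real.log (κ p.1 p.2)|

/-- Frobenius norm of a matrix. -/
def frobNorm {d k : ℕ} (A : Matrix (Fin d) (Fin k) ℝ) : ℝ :=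
  Real.sqrt (∑ l, ∑ m, (A l m) ^ 2)

/-- `V_π = Σ_ij π_ij M_ij` with `M_ij = (x_i - y_j)(x_i - y_j)ᵀ`. -/
def Vmat {n d : ℕ} (x y : Fin n → Fin d → ℝ) (π : Matrix (Fin n) (Fin n) ℝ) :
    Matrix (Fin d) (Fin d) ℝ :=
  fun l l' => ∑ i, ∑ j, π i j * ((x i l - y j l) * (x i l' - y j l'))

/-- Projection onto the tangent space of the Stiefel manifold at `U`:
`Proj_{T_U S}(A) = A - U (UᵀA + AᵀU)/2`. -/
def projTan {d k : ℕ} (U A : Matrix (Fin d) (Fin k) ℝ) : Matrix (Fin d) (Fin k) ℝ :=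
  A - (1 / 2 : ℝ) • (U * (Uᵀ * A + Aᵀ * U))

/-- Transport plan `(u_i A_ij v_j)_{ij}` normalized to total mass one. -/
def sinkMat {n : ℕ} (A : Matrix (Fin n) (Fin n) ℝ) (u v : Fin n → ℝ) :
    Matrix (Fin n) (Fin n) ℝ :=
  fun i j => u i * A i j * v j / (∑ i', ∑ j', u i' * A i' j' * v j')

/-!
For each pair `(i, j)`, the function `U ↦ -φ_ij(U) + ‖C‖_∞ ‖U‖_F²` is, up to an additive constant,
the quadratic form `Q(U) = ‖C‖_∞ ‖U‖_F² - ‖Uᵀ(x_i - y_j)‖²`, which is nonnegative by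
Cauchy–Schwarz because `‖x_i - y_j‖² ≤ ‖C‖_∞`. A nonnegative quadratic form is convex, since
`Q(aU + bV) = a Q(U) + b Q(V) - a b Q(U - V)` whenever `a + b = 1`. The function of the theorem is
the maximum of these finitely many convex functions.
-/

lemma convexOn_ciSup {ι E : Type*} [Finite ι] [Nonempty ι] [AddCommMonoid E] [SMul ℝ E]
    {s : Set E} {f : ι → E → ℝ} (hf : ∀ i, ConvexOn ℝ s (f i)) :
    ConvexOn ℝ s (fun x => ⨆ i, f i x) := by
  refine ⟨(hf (Classical.arbitrary ι)).1, fun x hx y hy a b ha hb hab => ciSup_le fun i => ?_⟩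
  simp only [smul_eq_mul]
  calc f i (a • x + b • y) ≤ a * f i x + b * f i y := (hf i).2 hx hy ha hb hab
    _ ≤ a * (⨆ j, f j x) + b * ⨆ j, f j y := by
      gcongr <;> exact le_ciSup (f := fun j => f j _) (Finite.bddAbove_range _) i

lemma sq_convex_combination {a b : ℝ} (hab : a + b = 1) (s t : ℝ) :
    (a * s + b * t) ^ 2 = a * s ^ 2 + b * t ^ 2 - a * b * (s - t) ^ 2 := by
  obtain rfl : b = 1 - a := by linarith
  ring

def frobSq {d k : ℕ} (U : Matrix (Fin d) (Fin k) ℝ) : ℝ := ∑ l, ∑ m, (U l m) ^ 2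

lemma frobSq_nonneg {d k : ℕ} (U : Matrix (Fin d) (Fin k) ℝ) : 0 ≤ frobSq U := by
  unfold frobSq; positivity

lemma frobSq_convex_combination {d k : ℕ} (U V : Matrix (Fin d) (Fin k) ℝ) {a b : ℝ}
    (hab : a + b = 1) :
    frobSq (a • U + b • V) = a * frobSq U + b * frobSq V - a * b * frobSq (U - V) := by
  simp only [frobSq, Matrix.add_apply, Matrix.smul_apply, Matrix.sub_apply, smul_eq_mul,
    Finset.mul_sum, ← Finset.sum_add_distrib, ← Finset.sum_sub_distrib,
    sq_convex_combination hab]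

lemma projSq_convex_combination {d k : ℕ} (U V : Matrix (Fin d) (Fin k) ℝ) (w : Fin d → ℝ)
    {a b : ℝ} (hab : a + b = 1) :
    projSq (a • U + b • V) w = a * projSq U w + b * projSq V w - a * b * projSq (U - V) w := by
  simp only [projSq, Matrix.add_apply, Matrix.smul_apply, Matrix.sub_apply, smul_eq_mul,
    add_mul, sub_mul, mul_assoc, Finset.sum_add_distrib, Finset.sum_sub_distrib,
    ← Finset.mul_sum, sq_convex_combination hab]

lemma projSq_le_sqnorm_mul_frobSq {d k : ℕ} (U : Matrix (Fin d) (Fin k) ℝ) (w : Fin d → ℝ) :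
    projSq U w ≤ sqnorm w * frobSq U := by
  rw [frobSq, Finset.sum_comm, Finset.mul_sum]
  refine Finset.sum_le_sum fun m _ => ?_
  rw [sqnorm, mul_comm]
  exact Finset.sum_mul_sq_le_sq_mul_sq _ _ _

lemma convexOn_mul_frobSq_sub_projSq {d k : ℕ} {c : ℝ} {w : Fin d → ℝ} (hc : sqnorm w ≤ c) :
    ConvexOn ℝ Set.univ (fun U : Matrix (Fin d) (Fin k) ℝ => c * frobSq U - projSq U w) := by
  refine ⟨convex_univ, fun U _ V _ a b ha hb hab => ?_⟩
  have hgap : 0 ≤ c * frobSq (U - V) - projSq (U - V) w := sub_nonneg.2 <|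
    (projSq_le_sqnorm_mul_frobSq _ _).trans (mul_le_mul_of_nonneg_right hc (frobSq_nonneg _))
  simp only [smul_eq_mul, frobSq_convex_combination U V hab, projSq_convex_combination U V w hab]
  nlinarith [mul_nonneg (mul_nonneg ha hb) hgap]

lemma costC_le_CInf {n d : ℕ} (x y : Fin n → Fin d → ℝ) (i j : Fin n) :
    costC x y i j ≤ CInf x y :=
  (le_abs_self _).trans <|
    le_ciSup (f := fun p : Fin n × Fin n => |costC x y p.1 p.2|) (Finite.bddAbove_range _) (i, j)

lemma convexOn_neg_phi_add_CInf_mul_frobSq {n d k : ℕ} (x y : Fin n → Fin d → ℝ)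
    (α β : Fin n → ℝ) (i j : Fin n) :
    ConvexOn ℝ Set.univ
      (fun U : Matrix (Fin d) (Fin k) ℝ => -phi x y α β U i j + CInf x y * frobSq U) := by
  refine ((convexOn_mul_frobSq_sub_projSq (costC_le_CInf x y i j)).add_const
    (-(α i + β j))).congr fun U _ => ?_
  simp only [phi, costCU, Pi.add_apply]
  ring

theorem statement0_general (n d k : ℕ) (hn : 1 ≤ n)
    (x y : Fin n → Fin d → ℝ) (α β : Fin n → ℝ) :
    ConvexOn ℝ (Set.univ : Set (Matrix (Fin d) (Fin k) ℝ))
      (fun U => (⨆ p : Fin n × Fin n, -(phi x y α β U p.1 p.2))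
        + CInf x y * (∑ l, ∑ m, (U l m) ^ 2)) := by
  have : Nonempty (Fin n) := Fin.pos_iff_nonempty.mp hn
  refine (convexOn_ciSup fun p : Fin n × Fin n =>
    convexOn_neg_phi_add_CInf_mul_frobSq x y α β p.1 p.2).congr fun U _ => ?_
  exact ((OrderIso.addRight (CInf x y * frobSq U)).map_ciSup (Finite.bddAbove_range _)).symm

/-- the function
`U ↦ max_{i,j} { -(α_i + β_j + ‖Uᵀ(x_i - y_j)‖²) } + ‖C‖_∞ ‖U‖_F²`
is convex on `ℝ^{d×k}`. -/
theorem statement0 (n d k : ℕ) (hn : 1 ≤ n) (hd : 1 ≤ d) (hk : 1 ≤ k)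
    (x y : Fin n → Fin d → ℝ) (α β : Fin n → ℝ) :
    ConvexOn ℝ (Set.univ : Set (Matrix (Fin d) (Fin k) ℝ))
      (fun U => (⨆ p : Fin n × Fin n, -(phi x y α β U p.1 p.2))
        + CInf x y * (∑ l, ∑ m, (U l m) ^ 2)) :=
  statement0_general n d k hn x y α β

end PRWPaper
end
end

section
/- Let n ≥ 1, r, c ∈ Δ^n, points x_1,…,x_n, y_1,…,y_n ∈ ℝ^d, U ∈ ℝ^{d×k}, and α, β ∈ ℝ^n; set x = (α, β, U). Then for every π̃ ∈ Π(r,c) and every π ∈ Π(r,c), ⟨π̃, C(U)⟩ − ⟨π, C(U)⟩ ≤ ⟨π̃, Z(x)⟩. In particular, f(π̃,U) − min_{π ∈ Π(r,c)} f(π,U) ≤ ⟨π̃, Z(x)⟩, where f(π,U) = ⟨π, C(U)⟩. -/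
open scoped BigOperators
open Matrix

noncomputable section

namespace PRWPaper

/-!
Since `π̃` and `π` have the same marginals, pairing them with the dual part `α_i + β_j` of
`φ` gives the same value, so `⟨π̃, C⟩ - ⟨π, C⟩ = ⟨π̃, φ⟩ - ⟨π, φ⟩`. As `π ≥ 0` and both plans
carry the same total mass `Σ r`, `⟨π, φ⟩ ≥ (min φ) Σ r`, and `⟨π̃, φ⟩ - (min φ) Σ r = ⟨π̃, Z⟩`.
-/

section Pairing

open Finset

variable {ι κ : Type*} [Fintype ι] [Fintype κ]

theorem sum_sum_mul_add_add_of_marginals {π : ι → κ → ℝ} {r : ι → ℝ} {c : κ → ℝ}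
    (hrow : ∀ i, ∑ j, π i j = r i) (hcol : ∀ j, ∑ i, π i j = c j)
    (a : ι → ℝ) (b : κ → ℝ) (C : ι → κ → ℝ) :
    ∑ i, ∑ j, π i j * (a i + b j + C i j)
      = ∑ i, r i * a i + ∑ j, c j * b j + ∑ i, ∑ j, π i j * C i j := by
  have ha : ∑ i, ∑ j, π i j * a i = ∑ i, r i * a i := by
    simp only [← sum_mul, hrow]
  have hb : ∑ i, ∑ j, π i j * b j = ∑ j, c j * b j := by
    rw [sum_comm]
    simp only [← sum_mul, hcol]
  simp only [mul_add, sum_add_distrib, ha, hb]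

theorem sum_sum_mul_le_sum_sum_mul_of_le {π φ : ι → κ → ℝ} {m : ℝ}
    (hπ : ∀ i j, 0 ≤ π i j) (hm : ∀ i j, m ≤ φ i j) :
    (∑ i, ∑ j, π i j) * m ≤ ∑ i, ∑ j, π i j * φ i j := by
  simp only [sum_mul]
  exact sum_le_sum fun i _ => sum_le_sum fun j _ => mul_le_mul_of_nonneg_left (hm i j) (hπ i j)

theorem sum_sum_mul_sub_le_sum_sum_mul_sub_of_marginals {πt π : ι → κ → ℝ}
    {r : ι → ℝ} {c : κ → ℝ}
    (hπt_row : ∀ i, ∑ j, πt i j = r i) (hπt_col : ∀ j, ∑ i, πt i j = c j)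
    (hπ_row : ∀ i, ∑ j, π i j = r i) (hπ_col : ∀ j, ∑ i, π i j = c j)
    (hπ : ∀ i j, 0 ≤ π i j) (a : ι → ℝ) (b : κ → ℝ) (C : ι → κ → ℝ) {m : ℝ}
    (hm : ∀ i j, m ≤ a i + b j + C i j) :
    ∑ i, ∑ j, πt i j * C i j - ∑ i, ∑ j, π i j * C i j
      ≤ ∑ i, ∑ j, πt i j * (a i + b j + C i j - m) := by
  have hmass : ∑ i, ∑ j, πt i j = ∑ i, ∑ j, π i j := by simp only [hπt_row, hπ_row]
  have hZ : ∑ i, ∑ j, πt i j * (a i + b j + C i j - m)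
      = ∑ i, ∑ j, πt i j * (a i + b j + C i j) - (∑ i, ∑ j, π i j) * m := by
    simp only [mul_sub, sum_sub_distrib, ← hmass, sum_mul]
  have hlow := sum_sum_mul_le_sum_sum_mul_of_le hπ hm
  rw [sum_sum_mul_add_add_of_marginals hπ_row hπ_col] at hlow
  rw [hZ, sum_sum_mul_add_add_of_marginals hπt_row hπt_col]
  linarith

end Pairing

theorem phiMin_le_phi {n d k : ℕ} (x y : Fin n → Fin d → ℝ) (α β : Fin n → ℝ)
    (U : Matrix (Fin d) (Fin k) ℝ) (i j : Fin n) :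
    phiMin x y α β U ≤ phi x y α β U i j :=
  ciInf_le (Set.finite_range _).bddBelow (i, j)

theorem statement1_general (n d k : ℕ) (r c : Fin n → ℝ)
    (x y : Fin n → Fin d → ℝ)
    (U : Matrix (Fin d) (Fin k) ℝ) (α β : Fin n → ℝ)
    (πt π : Matrix (Fin n) (Fin n) ℝ) (hπt : inPlans r c πt) (hπ : inPlans r c π) :
    (∑ i, ∑ j, πt i j * costCU x y U i j) - (∑ i, ∑ j, π i j * costCU x y U i j)
      ≤ ∑ i, ∑ j, πt i j * (phi x y α β U i j - phiMin x y α β U) :=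
  sum_sum_mul_sub_le_sum_sum_mul_sub_of_marginals hπt.1 hπt.2.1 hπ.1 hπ.2.1 hπ.2.2
    α β (costCU x y U) (phiMin_le_phi x y α β U)

/-- for `π̃, π ∈ Π(r,c)`,
`⟨π̃, C(U)⟩ - ⟨π, C(U)⟩ ≤ ⟨π̃, Z(x)⟩`, where `Z(x)_ij = φ_ij(x) - min_{ij} φ_ij(x)`. -/
theorem statement1 (n d k : ℕ) (hn : 1 ≤ n) (r c : Fin n → ℝ)
    (hr : inSimplex r) (hc : inSimplex c) (x y : Fin n → Fin d → ℝ)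
    (U : Matrix (Fin d) (Fin k) ℝ) (α β : Fin n → ℝ)
    (πt π : Matrix (Fin n) (Fin n) ℝ) (hπt : inPlans r c πt) (hπ : inPlans r c π) :
    (∑ i, ∑ j, πt i j * costCU x y U i j) - (∑ i, ∑ j, π i j * costCU x y U i j)
      ≤ ∑ i, ∑ j, πt i j * (phi x y α β U i j - phiMin x y α β U) :=
  statement1_general n d k r c x y U α β πt π hπt hπ

end PRWPaper
end
end

section
/- Let r, c ∈ Δ^n, B ∈ ℝ, and let x_1,…,x_n, y_1,…,y_n ∈ ℝ^d, C_ij = ‖x_i − y_j‖². Suppose U ∈ ℝ^{d×k} satisfies U^TU = I_k, and α, β ∈ ℝ^n satisfy: α_i + β_j + ‖U^T(x_i − y_j)‖² ≥ −1 for all i, j ∈ [n], r^Tα = c^Tβ, and r^Tα ≤ B. Then for every i ∈ [n], −1 − ‖C‖_∞ − B ≤ α_i ≤ r_i^{-1}( (1 − r_i)(1 + ‖C‖_∞ + B) + B ), where ‖C‖_∞ = max_{i,j} |C_ij|. -/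
/-! Since `c` is a probability vector and `cᵀβ = rᵀα ≤ B`, some `β_j ≤ B`. Together with
`‖Uᵀ(x_i - y_j)‖² ≤ C_ij ≤ ‖C‖_∞` (Bessel) the constraint at `(i, j)` bounds every `α_i` from
below, and isolating `r_i α_i` in `rᵀα ≤ B` turns these lower bounds into the upper bound. -/

open scoped BigOperators
open Matrix

noncomputable section

namespace PRWPaper

lemma sqnorm_eq_dotProduct {d : ℕ} (v : Fin d → ℝ) : sqnorm v = v ⬝ᵥ v := by
  simp only [sqnorm, dotProduct, sq]

lemma projSq_eq_sqnorm_mulVec {d k : ℕ} (U : Matrix (Fin d) (Fin k) ℝ) (w : Fin d → ℝ) :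
    projSq U w = sqnorm (Uᵀ *ᵥ w) := by
  simp only [projSq, sqnorm, mulVec, dotProduct, transpose_apply]

lemma projSq_le_sqnorm {d k : ℕ} {U : Matrix (Fin d) (Fin k) ℝ} (hU : Uᵀ * U = 1)
    (w : Fin d → ℝ) : projSq U w ≤ sqnorm w := by
  rw [projSq_eq_sqnorm_mulVec, sqnorm_eq_dotProduct, sqnorm_eq_dotProduct]
  set p := Uᵀ *ᵥ w
  have hcross : w ⬝ᵥ (U *ᵥ p) = p ⬝ᵥ p := by
    rw [dotProduct_mulVec, ← mulVec_transpose]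
  have hisom : (U *ᵥ p) ⬝ᵥ (U *ᵥ p) = p ⬝ᵥ p := by
    rw [dotProduct_mulVec, ← mulVec_transpose, mulVec_mulVec, hU, one_mulVec]
  -- Pythagoras: `0 ≤ ‖w - U Uᵀ w‖² = ‖w‖² - ‖Uᵀ w‖²`.
  have hres : 0 ≤ sqnorm (w - U *ᵥ p) := Finset.sum_nonneg fun _ _ => sq_nonneg _
  rw [sqnorm_eq_dotProduct, sub_dotProduct, dotProduct_sub, dotProduct_sub, hcross,
    dotProduct_comm (U *ᵥ p) w, hcross, hisom] at hres
  linarith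

lemma costCU_le_CInf {n d k : ℕ} (x y : Fin n → Fin d → ℝ) {U : Matrix (Fin d) (Fin k) ℝ}
    (hU : Uᵀ * U = 1) (i j : Fin n) : costCU x y U i j ≤ CInf x y :=
  (projSq_le_sqnorm hU _).trans (costC_le_CInf x y i j)

lemma inSimplex.exists_le_of_sum_mul_le {n : ℕ} {c : Fin n → ℝ} (hc : inSimplex c)
    {β : Fin n → ℝ} {B : ℝ} (h : ∑ j, c j * β j ≤ B) : ∃ j, β j ≤ B := by
  have hne : (Finset.univ : Finset (Fin n)).Nonempty :=
    Finset.nonempty_of_sum_ne_zero (f := c) (by rw [hc.1]; exact one_ne_zero)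
  have hB : ∑ j, c j * β j ≤ ∑ j, c j * B := by rw [← Finset.sum_mul, hc.1, one_mul]; exact h
  obtain ⟨j, -, hj⟩ := Finset.exists_le_of_sum_le hne hB
  exact ⟨j, le_of_mul_le_mul_left hj (hc.2 j)⟩

lemma inSimplex.mul_le_of_sum_mul_le {n : ℕ} {r : Fin n → ℝ} (hr : inSimplex r)
    {α : Fin n → ℝ} {L B : ℝ} (hL : ∀ i, L ≤ α i) (h : ∑ i, r i * α i ≤ B) (i : Fin n) :
    r i * α i ≤ B - (1 - r i) * L := by
  have hrest : (1 - r i) * L ≤ ∑ i' ∈ Finset.univ.erase i, r i' * α i' := by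
    have hmass : ∑ i' ∈ Finset.univ.erase i, r i' = 1 - r i := by
      rw [← hr.1, ← Finset.add_sum_erase _ _ (Finset.mem_univ i), add_sub_cancel_left]
    rw [← hmass, Finset.sum_mul]
    exact Finset.sum_le_sum fun i' _ => mul_le_mul_of_nonneg_left (hL i') (hr.2 i').le
  rw [← Finset.add_sum_erase _ _ (Finset.mem_univ i)] at h
  linarith

theorem statement3_general (n d k : ℕ) (r c : Fin n → ℝ)
    (hr : inSimplex r) (hc : inSimplex c) (B : ℝ)
    (x y : Fin n → Fin d → ℝ) (U : Matrix (Fin d) (Fin k) ℝ)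
    (hU : Uᵀ * U = 1) (α β : Fin n → ℝ)
    (h1 : ∀ i j, -1 ≤ α i + β j + costCU x y U i j)
    (h2 : (∑ i, r i * α i) = ∑ j, c j * β j)
    (h3 : (∑ i, r i * α i) ≤ B) :
    ∀ i, -1 - CInf x y - B ≤ α i
      ∧ α i ≤ (r i)⁻¹ * ((1 - r i) * (1 + CInf x y + B) + B) := by
  obtain ⟨j, hj⟩ := hc.exists_le_of_sum_mul_le (h2 ▸ h3)
  have hlow : ∀ i, -1 - CInf x y - B ≤ α i := fun i => by
    linarith [h1 i j, costCU_le_CInf x y hU i j]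
  intro i
  refine ⟨hlow i, ?_⟩
  rw [le_inv_mul_iff₀ (hr.2 i)]
  linarith [hr.mul_le_of_sum_mul_le hlow h3 i]

/-- boundedness of the dual variable `α` (estimate in Theorem 2.8). -/
theorem statement3 (n d k : ℕ) (hn : 1 ≤ n) (r c : Fin n → ℝ)
    (hr : inSimplex r) (hc : inSimplex c) (B : ℝ)
    (x y : Fin n → Fin d → ℝ) (U : Matrix (Fin d) (Fin k) ℝ)
    (hU : Uᵀ * U = 1) (α β : Fin n → ℝ)
    (h1 : ∀ i j, -1 ≤ α i + β j + costCU x y U i j)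
    (h2 : (∑ i, r i * α i) = ∑ j, c j * β j)
    (h3 : (∑ i, r i * α i) ≤ B) :
    ∀ i, -1 - CInf x y - B ≤ α i
      ∧ α i ≤ (r i)⁻¹ * ((1 - r i) * (1 + CInf x y + B) + B) :=
  statement3_general n d k r c hr hc B x y U hU α β h1 h2 h3

end PRWPaper
end
end

section
/- Let δ_1 > 0, δ_2 > 0, τ̄ > 0, E_low ∈ ℝ. Let {E_t}_{t≥0}, {a_t}_{t≥0}, {b_t}_{t≥0}, {ω_t}_{t≥0}, {τ_t}_{t≥0} be real sequences with a_t ≥ 0, b_t ≥ 0, ω_t ≥ 0, τ_t ≥ τ̄, E_t ≥ E_low for all t, Ω := Σ_{t=0}^∞ ω_t < ∞, and E_{t+1} ≤ E_t − δ_1 τ_t a_t² − δ_2 b_{t+1}² + ω_t for all t ≥ 0. Set Υ = (E_0 + δ_2 b_0² + Ω − E_low)/min{δ_1 τ̄, δ_2}. Then: (i) Σ_{t=0}^T (a_t² + b_t²) ≤ Υ for every T ≥ 0; (ii) a_t → 0 and b_t → 0; (iii) for any ε_1 > 0 and ε_2 > 0 there exists t ≤ ⌈Υ max{ε_1^{-2},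 ε_2^{-2}}⌉ with a_t ≤ ε_1 and b_t ≤ ε_2. -/
/-!
Telescoping the descent inequality bounds the partial sums of
`δ₁ τ_t a_t² + δ₂ b_{t+1}²` by `E_0 - E_low` plus partial sums of `ω`, and letting the
horizon go to infinity replaces the latter by `Ω`. Since `min (δ₁ τ̄) δ₂ (a_t² + b_t²)` is
at most `δ₁ τ_t a_t² + δ₂ b_t²`, shifting the index of `b` (at the price of `δ₂ b_0²`) gives
(i). Bounded partial sums make `a_t² + b_t²` summable, hence null, which gives (ii). For (iii),
if `max(ε₁⁻², ε₂⁻²) (a_t² + b_t²) ≥ 1` for all `t ≤ N := ⌈Υ max(ε₁⁻², ε₂⁻²)⌉`, the partial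
sum up to `N` would be at least `(N + 1) / max(ε₁⁻², ε₂⁻²) > Υ`.
-/

open scoped BigOperators
open Matrix

noncomputable section

namespace PRWPaper

open Filter Topology Finset

theorem sum_range_le_sub_add_sum {E f ω : ℕ → ℝ} (hdec : ∀ t, E (t + 1) ≤ E t - f t + ω t)
    (n : ℕ) : ∑ t ∈ range n, f t ≤ E 0 - E n + ∑ t ∈ range n, ω t := by
  induction n with
  | zero => simp
  | succ n ih =>
    rw [sum_range_succ, sum_range_succ]
    linarith [hdec n]

theorem sum_range_le_add_tsum {f ω : ℕ → ℝ} {C : ℝ} (hf : ∀ t, 0 ≤ f t) (hω : Summable ω)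
    (h : ∀ n, ∑ t ∈ range n, f t ≤ C + ∑ t ∈ range n, ω t) (n : ℕ) :
    ∑ t ∈ range n, f t ≤ C + ∑' t, ω t := by
  refine ge_of_tendsto (hω.hasSum.tendsto_sum_nat.const_add C)
    (eventually_atTop.2 ⟨n, fun m hnm => ?_⟩)
  exact (sum_le_sum_of_subset_of_nonneg (range_subset_range.2 hnm) fun t _ _ => hf t).trans (h m)

theorem sum_range_le_add_sum_range_succ {g : ℕ → ℝ} (hg : ∀ t, 0 ≤ g t) (n : ℕ) :
    ∑ t ∈ range n, g t ≤ g 0 + ∑ t ∈ range n, g (t + 1) := by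
  cases n with
  | zero => simpa using hg 0
  | succ n =>
    rw [sum_range_succ', sum_range_succ (fun t => g (t + 1))]
    linarith [hg (n + 1)]

theorem tendsto_zero_of_sq_le {α : Type*} {l : Filter α} {x f : α → ℝ}
    (hf : Tendsto f l (𝓝 0)) (h : ∀ t, x t ^ 2 ≤ f t) : Tendsto x l (𝓝 0) :=
  squeeze_zero_norm (fun t => Real.abs_le_sqrt (h t)) (by simpa using hf.sqrt)

theorem exists_le_ceil_mul_lt_one {c : ℕ → ℝ} {Υ M : ℝ} (hM : 0 ≤ M)
    (h : ∀ T, ∑ t ∈ range (T + 1), c t ≤ Υ) : ∃ t ≤ ⌈Υ * M⌉₊, M * c t < 1 := by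
  by_contra! hge
  set N := ⌈Υ * M⌉₊
  have hcount : ((N + 1 : ℕ) : ℝ) ≤ M * ∑ t ∈ range (N + 1), c t := by
    rw [mul_sum]
    simpa using card_nsmul_le_sum (range (N + 1)) _ 1 fun t ht => hge t (mem_range_succ_iff.1 ht)
  have hbound := mul_le_mul_of_nonneg_left (h N) hM
  push_cast at hcount
  linarith [Nat.le_ceil (Υ * M)]

theorem le_and_le_of_max_inv_sq_mul_le_one {x y ε δ : ℝ} (hε : 0 < ε) (hδ : 0 < δ)
    (h : max (ε ^ 2)⁻¹ (δ ^ 2)⁻¹ * (x ^ 2 + y ^ 2) ≤ 1) : x ≤ ε ∧ y ≤ δ := by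
  have hM : 0 ≤ max (ε ^ 2)⁻¹ (δ ^ 2)⁻¹ := le_max_of_le_left (by positivity)
  have hx : x ^ 2 ≤ ε ^ 2 := by
    rw [← inv_mul_le_one₀ (by positivity)]
    calc (ε ^ 2)⁻¹ * x ^ 2 ≤ max (ε ^ 2)⁻¹ (δ ^ 2)⁻¹ * (x ^ 2 + y ^ 2) :=
          mul_le_mul (le_max_left _ _) (le_add_of_nonneg_right (sq_nonneg y)) (sq_nonneg x) hM
      _ ≤ 1 := h
  have hy : y ^ 2 ≤ δ ^ 2 := by
    rw [← inv_mul_le_one₀ (by positivity)]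
    calc (δ ^ 2)⁻¹ * y ^ 2 ≤ max (ε ^ 2)⁻¹ (δ ^ 2)⁻¹ * (x ^ 2 + y ^ 2) :=
          mul_le_mul (le_max_right _ _) (le_add_of_nonneg_left (sq_nonneg x)) (sq_nonneg y) hM
      _ ≤ 1 := h
  exact ⟨(abs_le_of_sq_le_sq' hx hε.le).2, (abs_le_of_sq_le_sq' hy hδ.le).2⟩

theorem min_mul_sum_range_sq_add_sq_le {δ1 δ2 τb Elow : ℝ} {E a b ω τ : ℕ → ℝ}
    (hδ1 : 0 ≤ δ1) (hδ2 : 0 ≤ δ2) (hτb : 0 ≤ τb) (hτ : ∀ t, τb ≤ τ t) (hE : ∀ t, Elow ≤ E t)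
    (hsum : Summable ω)
    (hdec : ∀ t, E (t + 1) ≤ E t - δ1 * τ t * a t ^ 2 - δ2 * b (t + 1) ^ 2 + ω t) (n : ℕ) :
    min (δ1 * τb) δ2 * ∑ t ∈ range n, (a t ^ 2 + b t ^ 2)
      ≤ E 0 + δ2 * b 0 ^ 2 + ∑' t, ω t - Elow := by
  set f := fun t => δ1 * τ t * a t ^ 2 + δ2 * b (t + 1) ^ 2
  have hf : ∀ t, 0 ≤ f t := fun t => by have := hτb.trans (hτ t); positivity
  have htel : ∀ n, ∑ t ∈ range n, f t ≤ (E 0 - Elow) + ∑ t ∈ range n, ω t := fun n => by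
    linarith [sum_range_le_sub_add_sum (E := E) (f := f) (ω := ω) (fun t => by linarith [hdec t]) n,
      hE n]
  have hpoint : ∀ t, min (δ1 * τb) δ2 * (a t ^ 2 + b t ^ 2) ≤ δ1 * τ t * a t ^ 2 + δ2 * b t ^ 2 :=
    fun t => by
      rw [mul_add]
      gcongr
      · exact (min_le_left _ _).trans (mul_le_mul_of_nonneg_left (hτ t) hδ1)
      · exact min_le_right _ _
  calc min (δ1 * τb) δ2 * ∑ t ∈ range n, (a t ^ 2 + b t ^ 2)
      ≤ ∑ t ∈ range n, δ1 * τ t * a t ^ 2 + ∑ t ∈ range n, δ2 * b t ^ 2 := by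
        rw [mul_sum, ← sum_add_distrib]
        exact sum_le_sum fun t _ => hpoint t
    _ ≤ ∑ t ∈ range n, δ1 * τ t * a t ^ 2
          + (δ2 * b 0 ^ 2 + ∑ t ∈ range n, δ2 * b (t + 1) ^ 2) := by
        gcongr
        exact sum_range_le_add_sum_range_succ (fun t => by positivity) n
    _ = δ2 * b 0 ^ 2 + ∑ t ∈ range n, f t := by
        rw [sum_add_distrib]; ring
    _ ≤ E 0 + δ2 * b 0 ^ 2 + ∑' t, ω t - Elow := by
        linarith [sum_range_le_add_tsum hf hsum htel n]

theorem statement7_general (δ1 δ2 τb Elow : ℝ) (hδ1 : 0 < δ1) (hδ2 : 0 < δ2) (hτb : 0 < τb)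
    (E a b ω τ : ℕ → ℝ)
    (hτ : ∀ t, τb ≤ τ t) (hE : ∀ t, Elow ≤ E t)
    (hsum : Summable ω)
    (hdec : ∀ t, E (t + 1) ≤ E t - δ1 * τ t * (a t) ^ 2 - δ2 * (b (t + 1)) ^ 2 + ω t) :
    (∀ T : ℕ, ∑ t ∈ Finset.range (T + 1), ((a t) ^ 2 + (b t) ^ 2)
        ≤ (E 0 + δ2 * (b 0) ^ 2 + (∑' s, ω s) - Elow) / min (δ1 * τb) δ2)
    ∧ Filter.Tendsto a Filter.atTop (nhds 0)
    ∧ Filter.Tendsto b Filter.atTop (nhds 0)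
    ∧ ∀ ε1 ε2 : ℝ, 0 < ε1 → 0 < ε2 →
        ∃ t : ℕ,
          t ≤ Nat.ceil (((E 0 + δ2 * (b 0) ^ 2 + (∑' s, ω s) - Elow) / min (δ1 * τb) δ2)
              * max ((ε1 ^ 2)⁻¹) ((ε2 ^ 2)⁻¹))
          ∧ a t ≤ ε1 ∧ b t ≤ ε2 := by
  have hpartial : ∀ n, ∑ t ∈ range n, (a t ^ 2 + b t ^ 2)
      ≤ (E 0 + δ2 * b 0 ^ 2 + ∑' s, ω s - Elow) / min (δ1 * τb) δ2 := fun n =>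
    (le_div_iff₀' (lt_min (mul_pos hδ1 hτb) hδ2)).2 <|
      min_mul_sum_range_sq_add_sq_le hδ1.le hδ2.le hτb.le hτ hE hsum hdec n
  have hsq : Tendsto (fun t => a t ^ 2 + b t ^ 2) atTop (𝓝 0) :=
    (summable_of_sum_range_le (fun t => by positivity) hpartial).tendsto_atTop_zero
  refine ⟨fun T => hpartial (T + 1),
    tendsto_zero_of_sq_le hsq fun t => le_add_of_nonneg_right (sq_nonneg _),
    tendsto_zero_of_sq_le hsq fun t => le_add_of_nonneg_left (sq_nonneg _),
    fun ε1 ε2 hε1 hε2 => ?_⟩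
  obtain ⟨t, ht, hlt⟩ := exists_le_ceil_mul_lt_one (M := max (ε1 ^ 2)⁻¹ (ε2 ^ 2)⁻¹)
    (le_max_of_le_left (by positivity)) fun T => hpartial (T + 1)
  exact ⟨t, ht, le_and_le_of_max_inv_sq_mul_le_one hε1 hε2 hlt.le⟩

/-- abstract convergence/complexity result (Theorem 3.3). -/
theorem statement7 (δ1 δ2 τb Elow : ℝ) (hδ1 : 0 < δ1) (hδ2 : 0 < δ2) (hτb : 0 < τb)
    (E a b ω τ : ℕ → ℝ)
    (ha : ∀ t, 0 ≤ a t) (hb : ∀ t, 0 ≤ b t) (hω : ∀ t, 0 ≤ ω t)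
    (hτ : ∀ t, τb ≤ τ t) (hE : ∀ t, Elow ≤ E t)
    (hsum : Summable ω)
    (hdec : ∀ t, E (t + 1) ≤ E t - δ1 * τ t * (a t) ^ 2 - δ2 * (b (t + 1)) ^ 2 + ω t) :
    (∀ T : ℕ, ∑ t ∈ Finset.range (T + 1), ((a t) ^ 2 + (b t) ^ 2)
        ≤ (E 0 + δ2 * (b 0) ^ 2 + (∑' s, ω s) - Elow) / min (δ1 * τb) δ2)
    ∧ Filter.Tendsto a Filter.atTop (nhds 0)
    ∧ Filter.Tendsto b Filter.atTop (nhds 0)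
    ∧ ∀ ε1 ε2 : ℝ, 0 < ε1 → 0 < ε2 →
        ∃ t : ℕ,
          t ≤ Nat.ceil (((E 0 + δ2 * (b 0) ^ 2 + (∑' s, ω s) - Elow) / min (δ1 * τb) δ2)
              * max ((ε1 ^ 2)⁻¹) ((ε2 ^ 2)⁻¹))
          ∧ a t ≤ ε1 ∧ b t ≤ ε2 :=
  statement7_general δ1 δ2 τb Elow hδ1 hδ2 hτb E a b ω τ hτ hE hsum hdec

end PRWPaper
end
end

section
/- Let n ≥ 1, r, c ∈ Δ^n, and A ∈ ℝ^{n×n} with A_ij > 0 for all i,j. Let u^{(0)}, v^{(0)} ∈ ℝ^n be entrywise positive, and define the Sinkhorn iterates u^{(ℓ+1)} = r / (A v^{(ℓ)}) and v^{(ℓ+1)} = c / (A^T u^{(ℓ+1)}) (entrywise division). For each ℓ, let π^{(ℓ)} be the matrix with entries u_i^{(ℓ)} A_ij v_j^{(ℓ)} normalized to have total sum 1, and π^{(ℓ+1/2)} the matrix with entries u_i^{(ℓ+1)} A_ij v_j^{(ℓ)} normalized to have total sum 1. Then ‖π^{(0)}1 − r‖₁ + ‖(π^{(0)})^T 1 −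 c‖₁ ≥ ‖(π^{(1/2)})^T 1 − c‖₁ ≥ ‖π^{(1)} 1 − r‖₁, and for every ℓ ≥ 1, ‖π^{(ℓ)} 1 − r‖₁ ≥ ‖(π^{(ℓ+1/2)})^T 1 − c‖₁ ≥ ‖π^{(ℓ+1)} 1 − r‖₁. -/
open scoped BigOperators
open Matrix

noncomputable section

namespace PRWPaper

/- The half step rescales the rows of `π^{(ℓ)}` so that they sum to `r`, and the full step rescales
the columns of `π^{(ℓ+1/2)}` so that they sum to `c`. Rescaling the rows of a nonnegative matrix
to sum to `r` moves it in `ℓ₁` by exactly its row residual, so by the triangle inequality the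
column residual grows by at most the row residual; symmetrically for columns. After a half step
the row residual vanishes and after a full step the column residual vanishes, which turns these
bounds into the monotonicity claims. -/

section Residuals

variable {n : ℕ}

lemma colRes_le_l1norm_sub_add (c : Fin n → ℝ) (π π' : Matrix (Fin n) (Fin n) ℝ) :
    colRes c π' ≤ l1norm (π' - π) + colRes c π := by
  unfold colRes l1norm
  rw [Finset.sum_comm, ← Finset.sum_add_distrib]
  refine Finset.sum_le_sum fun j _ => ?_
  calc |∑ i, π' i j - c j|
      = |∑ i, (π' - π) i j + (∑ i, π i j - c j)| := by
        simp only [Matrix.sub_apply, Finset.sum_sub_distrib]; ring_nf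
    _ ≤ |∑ i, (π' - π) i j| + |∑ i, π i j - c j| := abs_add_le _ _
    _ ≤ ∑ i, |(π' - π) i j| + |∑ i, π i j - c j| := by
        gcongr; exact Finset.abs_sum_le_sum_abs _ _

lemma rowRes_eq_colRes_transpose (r : Fin n → ℝ) (π : Matrix (Fin n) (Fin n) ℝ) :
    rowRes r π = colRes r πᵀ := rfl

lemma l1norm_transpose (π : Matrix (Fin n) (Fin n) ℝ) : l1norm πᵀ = l1norm π :=
  Finset.sum_comm

lemma rowRes_le_l1norm_sub_add (r : Fin n → ℝ) (π π' : Matrix (Fin n) (Fin n) ℝ) :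
    rowRes r π' ≤ l1norm (π' - π) + rowRes r π := by
  simpa only [rowRes_eq_colRes_transpose, ← Matrix.transpose_sub, l1norm_transpose]
    using colRes_le_l1norm_sub_add r πᵀ π'ᵀ

lemma rowRes_eq_zero {r : Fin n → ℝ} {π : Matrix (Fin n) (Fin n) ℝ}
    (hrow : ∀ i, ∑ j, π i j = r i) : rowRes r π = 0 := by
  simp [rowRes, hrow]

lemma colRes_eq_zero {c : Fin n → ℝ} {π : Matrix (Fin n) (Fin n) ℝ}
    (hcol : ∀ j, ∑ i, π i j = c j) : colRes c π = 0 := by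
  simp [colRes, hcol]

lemma l1norm_rowScale_sub {r : Fin n → ℝ} {π π' : Matrix (Fin n) (Fin n) ℝ} {s : Fin n → ℝ}
    (hπ : ∀ i j, 0 ≤ π i j) (hscale : ∀ i j, π' i j = s i * π i j)
    (hrow : ∀ i, ∑ j, π' i j = r i) :
    l1norm (π' - π) = rowRes r π := by
  unfold l1norm rowRes
  refine Finset.sum_congr rfl fun i _ => ?_
  have hsum : 0 ≤ ∑ j, π i j := Finset.sum_nonneg fun j _ => hπ i j
  calc ∑ j, |(π' - π) i j|
      = |s i - 1| * ∑ j, π i j := by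
        rw [Finset.mul_sum]
        refine Finset.sum_congr rfl fun j _ => ?_
        rw [Matrix.sub_apply, hscale, ← sub_one_mul, abs_mul, abs_of_nonneg (hπ i j)]
    _ = |∑ j, π i j - r i| := by
        rw [← abs_of_nonneg hsum, ← abs_mul, abs_of_nonneg hsum, ← hrow i, abs_sub_comm]
        simp only [hscale, ← Finset.mul_sum]
        ring_nf

lemma l1norm_colScale_sub {c : Fin n → ℝ} {π π' : Matrix (Fin n) (Fin n) ℝ} {s : Fin n → ℝ}
    (hπ : ∀ i j, 0 ≤ π i j) (hscale : ∀ i j, π' i j = s j * π i j)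
    (hcol : ∀ j, ∑ i, π' i j = c j) :
    l1norm (π' - π) = colRes c π := by
  rw [← l1norm_transpose, Matrix.transpose_sub]
  exact l1norm_rowScale_sub (fun j i => hπ i j) (fun j i => hscale i j) hcol

lemma colRes_le_of_rowScale {r c : Fin n → ℝ} {π π' : Matrix (Fin n) (Fin n) ℝ} {s : Fin n → ℝ}
    (hπ : ∀ i j, 0 ≤ π i j) (hscale : ∀ i j, π' i j = s i * π i j)
    (hrow : ∀ i, ∑ j, π' i j = r i) :
    colRes c π' ≤ rowRes r π + colRes c π :=
  l1norm_rowScale_sub hπ hscale hrow ▸ colRes_le_l1norm_sub_add c π π'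

lemma rowRes_le_of_colScale {r c : Fin n → ℝ} {π π' : Matrix (Fin n) (Fin n) ℝ} {s : Fin n → ℝ}
    (hπ : ∀ i j, 0 ≤ π i j) (hscale : ∀ i j, π' i j = s j * π i j)
    (hcol : ∀ j, ∑ i, π' i j = c j) :
    rowRes r π' ≤ colRes c π + rowRes r π :=
  l1norm_colScale_sub hπ hscale hcol ▸ rowRes_le_l1norm_sub_add r π π'

end Residuals

section Sinkhorn

variable {n : ℕ} (A : Matrix (Fin n) (Fin n) ℝ)

def sinkMass (u v : Fin n → ℝ) : ℝ := ∑ i, ∑ j, u i * A i j * v j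

lemma sinkMat_apply (u v : Fin n → ℝ) (i j : Fin n) :
    sinkMat A u v i j = u i * A i j * v j / sinkMass A u v := rfl

lemma sinkMass_eq_sum_row (u v : Fin n → ℝ) :
    sinkMass A u v = ∑ i, u i * ∑ j, A i j * v j := by
  simp only [sinkMass, Finset.mul_sum, mul_assoc]

lemma sinkMass_eq_sum_col (u v : Fin n → ℝ) :
    sinkMass A u v = ∑ j, v j * ∑ i, A i j * u i := by
  rw [sinkMass, Finset.sum_comm]
  simp only [Finset.mul_sum]
  exact Finset.sum_congr rfl fun j _ => Finset.sum_congr rfl fun i _ => by ring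

lemma sum_sinkMat_row (u v : Fin n → ℝ) (i : Fin n) :
    ∑ j, sinkMat A u v i j = u i * (∑ j, A i j * v j) / sinkMass A u v := by
  simp only [sinkMat_apply, ← Finset.sum_div, Finset.mul_sum, mul_assoc]

lemma sum_sinkMat_col (u v : Fin n → ℝ) (j : Fin n) :
    ∑ i, sinkMat A u v i j = v j * (∑ i, A i j * u i) / sinkMass A u v := by
  simp only [sinkMat_apply, ← Finset.sum_div, Finset.mul_sum]
  exact congrArg (· / _) (Finset.sum_congr rfl fun i _ => by ring)

variable {A}

lemma sinkMass_pos [Nonempty (Fin n)] (hA : ∀ i j, 0 < A i j) {u v : Fin n → ℝ}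
    (hu : ∀ i, 0 < u i) (hv : ∀ j, 0 < v j) : 0 < sinkMass A u v :=
  Finset.sum_pos (fun i _ => Finset.sum_pos (fun j _ => mul_pos (mul_pos (hu i) (hA i j)) (hv j))
    Finset.univ_nonempty) Finset.univ_nonempty

lemma sinkMat_nonneg (hA : ∀ i j, 0 ≤ A i j) {u v : Fin n → ℝ}
    (hu : ∀ i, 0 ≤ u i) (hv : ∀ j, 0 ≤ v j) (i j : Fin n) : 0 ≤ sinkMat A u v i j := by
  have hentry : ∀ i j, 0 ≤ u i * A i j * v j := fun i j =>
    mul_nonneg (mul_nonneg (hu i) (hA i j)) (hv j)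
  exact div_nonneg (hentry i j)
    (Finset.sum_nonneg fun i _ => Finset.sum_nonneg fun j _ => hentry i j)

lemma sinkMat_left_eq_mul {u u' v : Fin n → ℝ} (hu : ∀ i, u i ≠ 0) (hS : sinkMass A u v ≠ 0)
    (i j : Fin n) :
    sinkMat A u' v i j
      = u' i / u i * (sinkMass A u v / sinkMass A u' v) * sinkMat A u v i j := by
  rw [sinkMat_apply, sinkMat_apply]
  have := hu i
  field_simp

lemma sinkMat_right_eq_mul {u v v' : Fin n → ℝ} (hv : ∀ j, v j ≠ 0) (hS : sinkMass A u v ≠ 0)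
    (i j : Fin n) :
    sinkMat A u v' i j
      = v' j / v j * (sinkMass A u v / sinkMass A u v') * sinkMat A u v i j := by
  rw [sinkMat_apply, sinkMat_apply]
  have := hv j
  field_simp

lemma sum_sinkMat_row_of_update {r u' v : Fin n → ℝ} (hr : ∑ i, r i = 1)
    (hu' : ∀ i, u' i * ∑ j, A i j * v j = r i) (i : Fin n) :
    ∑ j, sinkMat A u' v i j = r i := by
  rw [sum_sinkMat_row, sinkMass_eq_sum_row, Finset.sum_congr rfl fun i _ => hu' i, hr, hu',
    div_one]

lemma sum_sinkMat_col_of_update {c u v' : Fin n → ℝ} (hc : ∑ j, c j = 1)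
    (hv' : ∀ j, v' j * ∑ i, A i j * u i = c j) (j : Fin n) :
    ∑ i, sinkMat A u v' i j = c j := by
  rw [sum_sinkMat_col, sinkMass_eq_sum_col, Finset.sum_congr rfl fun j _ => hv' j, hc, hv',
    div_one]

variable [Nonempty (Fin n)] {r c : Fin n → ℝ}

lemma colRes_sinkMat_update_le (hA : ∀ i j, 0 < A i j) {u u' v : Fin n → ℝ}
    (hu : ∀ i, 0 < u i) (hv : ∀ j, 0 < v j)
    (hr : ∑ i, r i = 1) (hu' : ∀ i, u' i * ∑ j, A i j * v j = r i) :
    colRes c (sinkMat A u' v) ≤ rowRes r (sinkMat A u v) + colRes c (sinkMat A u v) :=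
  colRes_le_of_rowScale
    (sinkMat_nonneg (fun i j => (hA i j).le) (fun i => (hu i).le) (fun j => (hv j).le))
    (sinkMat_left_eq_mul (fun i => (hu i).ne') (sinkMass_pos hA hu hv).ne')
    (sum_sinkMat_row_of_update hr hu')

lemma rowRes_sinkMat_update_le (hA : ∀ i j, 0 < A i j) {u v v' : Fin n → ℝ}
    (hu : ∀ i, 0 < u i) (hv : ∀ j, 0 < v j)
    (hc : ∑ j, c j = 1) (hv' : ∀ j, v' j * ∑ i, A i j * u i = c j) :
    rowRes r (sinkMat A u v') ≤ colRes c (sinkMat A u v) + rowRes r (sinkMat A u v) :=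
  rowRes_le_of_colScale
    (sinkMat_nonneg (fun i j => (hA i j).le) (fun i => (hu i).le) (fun j => (hv j).le))
    (sinkMat_right_eq_mul (fun j => (hv j).ne') (sinkMass_pos hA hu hv).ne')
    (sum_sinkMat_col_of_update hc hv')

end Sinkhorn

section Iterates

variable {n : ℕ} [Nonempty (Fin n)] {A : Matrix (Fin n) (Fin n) ℝ}

lemma sum_row_mul_pos (hA : ∀ i j, 0 < A i j) {v : Fin n → ℝ} (hv : ∀ j, 0 < v j) (i : Fin n) :
    0 < ∑ j, A i j * v j :=
  Finset.sum_pos (fun j _ => mul_pos (hA i j) (hv j)) Finset.univ_nonempty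

lemma sum_col_mul_pos (hA : ∀ i j, 0 < A i j) {u : Fin n → ℝ} (hu : ∀ i, 0 < u i) (j : Fin n) :
    0 < ∑ i, A i j * u i :=
  Finset.sum_pos (fun i _ => mul_pos (hA i j) (hu i)) Finset.univ_nonempty

lemma sinkhorn_iterates_pos (hA : ∀ i j, 0 < A i j) {r c : Fin n → ℝ}
    (hr : ∀ i, 0 < r i) (hc : ∀ j, 0 < c j) {u v : ℕ → Fin n → ℝ}
    (hu0 : ∀ i, 0 < u 0 i) (hv0 : ∀ j, 0 < v 0 j)
    (hu : ∀ ℓ i, u (ℓ + 1) i = r i / ∑ j, A i j * v ℓ j)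
    (hv : ∀ ℓ j, v (ℓ + 1) j = c j / ∑ i, A i j * u (ℓ + 1) i) :
    ∀ ℓ, (∀ i, 0 < u ℓ i) ∧ ∀ j, 0 < v ℓ j := by
  intro ℓ
  induction ℓ with
  | zero => exact ⟨hu0, hv0⟩
  | succ ℓ ih =>
    have hu_succ : ∀ i, 0 < u (ℓ + 1) i := fun i => by
      rw [hu]; exact div_pos (hr i) (sum_row_mul_pos hA ih.2 i)
    exact ⟨hu_succ, fun j => by rw [hv]; exact div_pos (hc j) (sum_col_mul_pos hA hu_succ j)⟩

end Iterates

/-- Lemma 4.1: monotonicity of the `ℓ₁` feasibility residuals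
along the Sinkhorn iteration `u^{(ℓ+1)} = r / (A v^{(ℓ)})`,
`v^{(ℓ+1)} = c / (Aᵀ u^{(ℓ+1)})`. -/
theorem statement8 (n : ℕ) (hn : 1 ≤ n) (r c : Fin n → ℝ)
    (hr : inSimplex r) (hc : inSimplex c)
    (A : Matrix (Fin n) (Fin n) ℝ) (hA : ∀ i j, 0 < A i j)
    (u v : ℕ → Fin n → ℝ)
    (hu0 : ∀ i, 0 < u 0 i) (hv0 : ∀ j, 0 < v 0 j)
    (hu : ∀ (ℓ : ℕ) (i : Fin n), u (ℓ + 1) i = r i / (∑ j, A i j * v ℓ j))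
    (hv : ∀ (ℓ : ℕ) (j : Fin n), v (ℓ + 1) j = c j / (∑ i, A i j * u (ℓ + 1) i)) :
    (colRes c (sinkMat A (u 1) (v 0))
        ≤ rowRes r (sinkMat A (u 0) (v 0)) + colRes c (sinkMat A (u 0) (v 0)))
    ∧ (rowRes r (sinkMat A (u 1) (v 1)) ≤ colRes c (sinkMat A (u 1) (v 0)))
    ∧ ∀ ℓ : ℕ, 1 ≤ ℓ →
        colRes c (sinkMat A (u (ℓ + 1)) (v ℓ)) ≤ rowRes r (sinkMat A (u ℓ) (v ℓ))
        ∧ rowRes r (sinkMat A (u (ℓ + 1)) (v (ℓ + 1)))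
            ≤ colRes c (sinkMat A (u (ℓ + 1)) (v ℓ)) := by
  have : Nonempty (Fin n) := Fin.pos_iff_nonempty.mp hn
  have hpos := sinkhorn_iterates_pos hA hr.2 hc.2 hu0 hv0 hu hv
  have hu' : ∀ ℓ i, u (ℓ + 1) i * ∑ j, A i j * v ℓ j = r i := fun ℓ i => by
    rw [hu]; exact div_mul_cancel₀ _ (sum_row_mul_pos hA (hpos ℓ).2 i).ne'
  have hv' : ∀ ℓ j, v (ℓ + 1) j * ∑ i, A i j * u (ℓ + 1) i = c j := fun ℓ j => by
    rw [hv]; exact div_mul_cancel₀ _ (sum_col_mul_pos hA (hpos (ℓ + 1)).1 j).ne'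
  have half_step : ∀ ℓ, colRes c (sinkMat A (u (ℓ + 1)) (v ℓ))
      ≤ rowRes r (sinkMat A (u ℓ) (v ℓ)) + colRes c (sinkMat A (u ℓ) (v ℓ)) := fun ℓ =>
    colRes_sinkMat_update_le hA (hpos ℓ).1 (hpos ℓ).2 hr.1 (hu' ℓ)
  have full_step : ∀ ℓ, rowRes r (sinkMat A (u (ℓ + 1)) (v (ℓ + 1)))
      ≤ colRes c (sinkMat A (u (ℓ + 1)) (v ℓ)) := fun ℓ => by
    simpa only [rowRes_eq_zero (sum_sinkMat_row_of_update hr.1 (hu' ℓ)), add_zero] using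
      rowRes_sinkMat_update_le (r := r) hA (hpos (ℓ + 1)).1 (hpos ℓ).2 hc.1 (hv' ℓ)
  refine ⟨half_step 0, full_step 0, fun ℓ hℓ => ⟨?_, full_step ℓ⟩⟩
  obtain ⟨m, rfl⟩ := Nat.exists_eq_add_of_le' hℓ
  simpa only [colRes_eq_zero (sum_sinkMat_col_of_update hc.1 (hv' m)), add_zero] using
    half_step (m + 1)

end PRWPaper
end
end

section
/- Let η > 0, κ ∈ ℝ^{n×n} with κ_ij > 0, r, c ∈ Δ^n, α, β ∈ ℝ^n, U ∈ ℝ^{d×k}. Let ζ = ζ_η((α,β,U),κ), π = ζ/‖ζ‖₁, and define α⁺ ∈ ℝ^n by α⁺_i = α_i − η log r_i + η log (ζ1)_i. Then L_η((α⁺,β,U),κ) − L_η((α,β,U),κ) = −η KL(r ‖ π1), where KL(p‖q) = Σ_i p_i log(p_i/q_i); consequently, by Pinsker's inequality, L_η((α⁺,β,U),κ) ≤ L_η((α,β,U),κ) − (η/2)‖π1 − r‖₁². -/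
/-!
Replacing `α` by `α⁺` multiplies row `i` of `ζ` by `r i / (ζ 1) i`, so the new `ζ` has row sums
`r` and total mass `1`; the change of `L_η` is then an explicit sum of logarithms, which
rearranges to `-η KL(r ‖ π 1)`. Pinsker's inequality follows from the pointwise bound
`a log (a / b) ≥ a - b + 3 (a - b)² / (2 (a + 2b))`, summed and combined with Sedrakyan's form of
Cauchy–Schwarz with weights `p i + 2 q i`, whose total is `3`.
-/

open scoped BigOperators
open Matrix

noncomputable section

namespace PRWPaper

open Real Set Finset

section Pinsker

lemma isMinOn_Ioi_of_hasDerivAt {f f' : ℝ → ℝ} {c : ℝ} (hc : 0 < c)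
    (hf : ∀ t, 0 < t → HasDerivAt f (f' t) t)
    (hleft : ∀ t ∈ Ioo 0 c, f' t ≤ 0) (hright : ∀ t ∈ Ioi c, 0 ≤ f' t) :
    IsMinOn f (Ioi 0) c := by
  intro x (hx : 0 < x)
  rcases le_total c x with hcx | hxc
  · refine monotoneOn_of_hasDerivWithinAt_nonneg (f' := f') (convex_Ici c)
      (fun t ht => (hf t (hc.trans_le ht)).continuousAt.continuousWithinAt)
      (fun t ht => ?_) (fun t ht => ?_) (le_refl c) hcx hcx <;> rw [interior_Ici] at ht
    · exact (hf t (hc.trans ht)).hasDerivWithinAt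
    · exact hright t ht
  · refine antitoneOn_of_hasDerivWithinAt_nonpos (f' := f') (convex_Ioc 0 c)
      (fun t ht => (hf t ht.1).continuousAt.continuousWithinAt)
      (fun t ht => ?_) (fun t ht => ?_) ⟨hx, hxc⟩ (right_mem_Ioc.2 hc) hxc <;>
      rw [interior_Ioc] at ht
    · exact (hf t ht.1).hasDerivWithinAt
    · exact hleft t ht

lemma sub_one_mul_five_mul_add_one_div_le_log {x : ℝ} (hx : 0 < x) :
    (x - 1) * (5 * x + 1) / (2 * x * (x + 2)) ≤ log x := by
  -- `f t = log t - (t - 1) (5t + 1) / (2t (t + 2))` in partial fractions; `f' t` has the sign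
  -- of `t - 1`
  let f : ℝ → ℝ := fun t => log t + (4 * t)⁻¹ + 27 * (4 * (t + 2))⁻¹ - 5 / 2
  have hderiv : ∀ t, 0 < t → HasDerivAt f ((t - 1) ^ 3 / (t ^ 2 * (t + 2) ^ 2)) t := by
    intro t ht
    have h := (((hasDerivAt_log ht.ne').add
      (((hasDerivAt_id t).const_mul (4 : ℝ)).inv (by positivity))).add
      (((((hasDerivAt_id t).add_const (2 : ℝ)).const_mul (4 : ℝ)).inv
        (by positivity)).const_mul 27)).sub_const (5 / 2 : ℝ)
    refine h.congr_deriv ?_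
    simp only [id]
    field_simp
    ring
  have hmin : f 1 ≤ f x := isMinOn_Ioi_of_hasDerivAt one_pos hderiv
    (fun t ht => div_nonpos_of_nonpos_of_nonneg
      (Odd.pow_nonpos (by decide) (by linarith [ht.2])) (by positivity))
    (fun t (ht : 1 < t) => div_nonneg (pow_nonneg (by linarith) _) (by positivity))
    (mem_Ioi.2 hx)
  have hf1 : f 1 = 0 := by norm_num [f]
  have hfx : f x = log x - (x - 1) * (5 * x + 1) / (2 * x * (x + 2)) := by
    simp only [f]
    field_simp
    ring
  linarith

lemma sub_add_three_mul_sq_div_le_mul_log_div {a b : ℝ} (ha : 0 < a) (hb : 0 < b) :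
    a - b + 3 * (a - b) ^ 2 / (2 * (a + 2 * b)) ≤ a * log (a / b) := by
  calc a - b + 3 * (a - b) ^ 2 / (2 * (a + 2 * b))
      = a * ((a / b - 1) * (5 * (a / b) + 1) / (2 * (a / b) * (a / b + 2))) := by
        field_simp
        ring
    _ ≤ a * log (a / b) := by
        gcongr
        exact sub_one_mul_five_mul_add_one_div_le_log (div_pos ha hb)

theorem pinsker {ι : Type*} [Fintype ι] {p q : ι → ℝ} (hp : ∀ i, 0 < p i) (hq : ∀ i, 0 < q i)
    (hp1 : ∑ i, p i = 1) (hq1 : ∑ i, q i = 1) :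
    (∑ i, |q i - p i|) ^ 2 / 2 ≤ ∑ i, p i * log (p i / q i) := by
  have hw : ∀ i ∈ (univ : Finset ι), 0 < p i + 2 * q i := fun i _ => by linarith [hp i, hq i]
  have hw1 : ∑ i, (p i + 2 * q i) = 3 := by
    rw [sum_add_distrib, ← mul_sum, hp1, hq1]
    norm_num
  calc (∑ i, |q i - p i|) ^ 2 / 2
      = 3 / 2 * ((∑ i, |p i - q i|) ^ 2 / ∑ i, (p i + 2 * q i)) := by
        simp only [abs_sub_comm (q _), hw1]
        ring
    _ ≤ 3 / 2 * ∑ i, |p i - q i| ^ 2 / (p i + 2 * q i) := by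
        gcongr
        exact sq_sum_div_le_sum_sq_div _ _ hw
    _ = ∑ i, (p i - q i + 3 * (p i - q i) ^ 2 / (2 * (p i + 2 * q i))) := by
        rw [sum_add_distrib, sum_sub_distrib, hp1, hq1, mul_sum, sub_self, zero_add]
        refine sum_congr rfl fun i _ => ?_
        have := hw i (mem_univ i)
        rw [sq_abs]
        field_simp
    _ ≤ ∑ i, p i * log (p i / q i) :=
        sum_le_sum fun i _ => sub_add_three_mul_sq_div_le_mul_log_div (hp i) (hq i)

end Pinsker

lemma l1norm_of_nonneg {n : ℕ} {A : Matrix (Fin n) (Fin n) ℝ} (hA : ∀ i j, 0 ≤ A i j) :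
    l1norm A = ∑ i, ∑ j, A i j :=
  sum_congr rfl fun i _ => sum_congr rfl fun j _ => abs_of_nonneg (hA i j)

lemma nonempty_of_inSimplex {n : ℕ} {r : Fin n → ℝ} (hr : inSimplex r) : Nonempty (Fin n) :=
  (nonempty_of_sum_ne_zero (hr.1 ▸ one_ne_zero)).to_type

section Sinkhorn

variable {n d k : ℕ} {η : ℝ} {κ : Matrix (Fin n) (Fin n) ℝ} {x y : Fin n → Fin d → ℝ}
  {α β : Fin n → ℝ} {U : Matrix (Fin d) (Fin k) ℝ}

lemma zeta_pos (hκ : ∀ i j, 0 < κ i j) (i j : Fin n) : 0 < zeta η κ x y α β U i j :=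
  mul_pos (hκ i j) (exp_pos _)

lemma sum_zeta_row_pos (hκ : ∀ i j, 0 < κ i j) (i : Fin n) :
    0 < ∑ j, zeta η κ x y α β U i j :=
  sum_pos (fun j _ => zeta_pos hκ i j) ⟨i, mem_univ i⟩

lemma zeta_add_mul (hη : η ≠ 0) (s : Fin n → ℝ) (i j : Fin n) :
    zeta η κ x y (fun i => α i + η * s i) β U i j = zeta η κ x y α β U i j * exp (-s i) := by
  simp only [zeta, phi, mul_assoc, ← exp_add]
  congr 2
  field_simp
  ring

lemma sum_piEta_row (i : Fin n) :
    ∑ j, piEta η κ x y α β U i j = (∑ j, zeta η κ x y α β U i j) / l1norm (zeta η κ x y α β U) :=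
  (sum_div ..).symm

lemma sum_zeta_row_update (hη : 0 < η) (hκ : ∀ i j, 0 < κ i j) {r αp : Fin n → ℝ}
    (hr : ∀ i, 0 < r i)
    (hαp : ∀ i, αp i = α i - η * log (r i) + η * log (∑ j, zeta η κ x y α β U i j))
    (i : Fin n) :
    ∑ j, zeta η κ x y αp β U i j = r i := by
  have hαp' : αp = fun i => α i + η * (log (∑ j, zeta η κ x y α β U i j) - log (r i)) :=
    funext fun i => by rw [hαp]; ring
  simp only [hαp', zeta_add_mul hη.ne', ← sum_mul, neg_sub, exp_sub,
    exp_log (hr i), exp_log (sum_zeta_row_pos hκ i)]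
  field_simp [(sum_zeta_row_pos hκ i).ne']

lemma l1norm_zeta_pos [Nonempty (Fin n)] (hκ : ∀ i j, 0 < κ i j) :
    0 < l1norm (zeta η κ x y α β U) := by
  rw [l1norm_of_nonneg fun i j => (zeta_pos hκ i j).le]
  exact sum_pos (fun i _ => sum_zeta_row_pos hκ i) univ_nonempty

lemma inSimplex_sum_piEta_row [Nonempty (Fin n)] (hκ : ∀ i j, 0 < κ i j) :
    inSimplex fun i => ∑ j, piEta η κ x y α β U i j := by
  have hS : 0 < l1norm (zeta η κ x y α β U) := l1norm_zeta_pos hκ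
  refine ⟨?_, fun i => ?_⟩
  · simp only [sum_piEta_row, ← sum_div]
    rw [← l1norm_of_nonneg fun i j => (zeta_pos hκ i j).le, div_self hS.ne']
  · dsimp only
    rw [sum_piEta_row]
    exact div_pos (sum_zeta_row_pos hκ i) hS

lemma Lfun_row_update_sub (hη : 0 < η) (hκ : ∀ i j, 0 < κ i j) {r c αp : Fin n → ℝ}
    (hr : inSimplex r)
    (hαp : ∀ i, αp i = α i - η * log (r i) + η * log (∑ j, zeta η κ x y α β U i j)) :
    Lfun η κ r c x y αp β U - Lfun η κ r c x y α β U
      = -η * ∑ i, r i * log (r i / ∑ j, piEta η κ x y α β U i j) := by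
  have := nonempty_of_inSimplex hr
  obtain ⟨hr1, hrpos⟩ := hr
  have hS : 0 < l1norm (zeta η κ x y α β U) := l1norm_zeta_pos hκ
  have hupdate : l1norm (zeta η κ x y αp β U) = 1 := by
    rw [l1norm_of_nonneg fun i j => (zeta_pos hκ i j).le]
    simp only [sum_zeta_row_update hη hκ hrpos hαp, hr1]
  have hterm : ∀ i, r i * αp i
      = r i * α i
        - η * (r i * log (r i / ((∑ j, zeta η κ x y α β U i j) / l1norm (zeta η κ x y α β U))))
        + η * log (l1norm (zeta η κ x y α β U)) * r i := by
    intro i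
    rw [hαp, log_div (hrpos i).ne' (div_pos (sum_zeta_row_pos hκ i) hS).ne',
      log_div (sum_zeta_row_pos hκ i).ne' hS.ne']
    ring
  simp only [Lfun, hupdate, log_one, mul_zero, add_zero, sum_piEta_row, hterm,
    sum_add_distrib, sum_sub_distrib, ← mul_sum, hr1]
  ring

end Sinkhorn

theorem statement9_general (n d k : ℕ) (η : ℝ) (hη : 0 < η)
    (κ : Matrix (Fin n) (Fin n) ℝ) (hκ : ∀ i j, 0 < κ i j)
    (r c : Fin n → ℝ) (hr : inSimplex r)
    (x y : Fin n → Fin d → ℝ) (α β : Fin n → ℝ) (U : Matrix (Fin d) (Fin k) ℝ)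
    (αp : Fin n → ℝ)
    (hαp : ∀ i, αp i = α i - η * Real.log (r i)
        + η * Real.log (∑ j, zeta η κ x y α β U i j)) :
    Lfun η κ r c x y αp β U - Lfun η κ r c x y α β U
        = -η * ∑ i, r i * Real.log (r i / (∑ j, piEta η κ x y α β U i j))
    ∧ Lfun η κ r c x y αp β U
        ≤ Lfun η κ r c x y α β U - (η / 2) * (rowRes r (piEta η κ x y α β U)) ^ 2 := by
  have := nonempty_of_inSimplex hr
  have hq : inSimplex fun i => ∑ j, piEta η κ x y α β U i j := inSimplex_sum_piEta_row hκ
  have hKL := Lfun_row_update_sub (c := c) hη hκ hr hαp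
  refine ⟨hKL, ?_⟩
  have hpinsker := mul_le_mul_of_nonneg_left (pinsker hr.2 hq.2 hr.1 hq.1) hη.le
  rw [rowRes]
  linarith

/-- the `α`-update of the Sinkhorn iteration decreases `L_η` by
`η · KL(r ‖ π 1)`, hence (via Pinsker) by at least `(η/2) ‖π 1 - r‖₁²`. -/
theorem statement9 (n d k : ℕ) (η : ℝ) (hη : 0 < η)
    (κ : Matrix (Fin n) (Fin n) ℝ) (hκ : ∀ i j, 0 < κ i j)
    (r c : Fin n → ℝ) (hr : inSimplex r) (hc : inSimplex c)
    (x y : Fin n → Fin d → ℝ) (α β : Fin n → ℝ) (U : Matrix (Fin d) (Fin k) ℝ)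
    (αp : Fin n → ℝ)
    (hαp : ∀ i, αp i = α i - η * Real.log (r i)
        + η * Real.log (∑ j, zeta η κ x y α β U i j)) :
    Lfun η κ r c x y αp β U - Lfun η κ r c x y α β U
        = -η * ∑ i, r i * Real.log (r i / (∑ j, piEta η κ x y α β U i j))
    ∧ Lfun η κ r c x y αp β U
        ≤ Lfun η κ r c x y α β U - (η / 2) * (rowRes r (piEta η κ x y α β U)) ^ 2 :=
  statement9_general n d k η hη κ hκ r c hr x y α β U αp hαp

end PRWPaper
end
end

section
/- Let η > 0, κ ∈ ℝ^{n×n} with κ_ij > 0, and x̃ = (α̃, β̃, Ũ) ∈ ℝ^n × ℝ^n × ℝ^{d×k} with ‖ζ_η(x̃,κ)‖₁ = 1. Then ⟨π_η(x̃,κ), Z(x̃)⟩ ≤ η (2 log n + ‖log κ‖_var), where ‖log κ‖_var = max_{i,j} log κ_ij − min_{i,j} log κ_ij. -/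
open scoped BigOperators
open Matrix

noncomputable section

namespace PRWPaper

/-!
Since `‖ζ‖₁ = 1`, the plan `π = ζ` is a Gibbs distribution and `φ_ij = η (log κ_ij - log π_ij)`.
Hence `⟨π, φ⟩ = η ⟨log κ, π⟩ + η H(π) ≤ η (max log κ + log n²)` by Jensen's inequality for the
entropy, while `π_ij ≤ 1` gives `φ_ij ≥ η log κ_ij ≥ η min log κ`, which bounds `min φ` from below.
-/

open Real

theorem sum_mul_neg_log_le_log_card {ι : Type*} [Fintype ι] {w : ι → ℝ} (hw : ∀ p, 0 < w p)
    (hw1 : ∑ p, w p = 1) :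
    ∑ p, w p * -log (w p) ≤ log (Fintype.card ι) := by
  have hjensen := strictConcaveOn_log_Ioi.concaveOn.le_map_sum (t := Finset.univ) (w := w)
    (p := fun p => (w p)⁻¹) (fun p _ => (hw p).le) hw1 (fun p _ => inv_pos.mpr (hw p))
  have hcard : ∑ p, w p • (w p)⁻¹ = Fintype.card ι := by
    simp [smul_eq_mul, mul_inv_cancel₀ (hw _).ne']
  calc ∑ p, w p * -log (w p) = ∑ p, w p • log (w p)⁻¹ := by simp [log_inv]
    _ ≤ log (∑ p, w p • (w p)⁻¹) := hjensen
    _ = log (Fintype.card ι) := by rw [hcard]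

theorem eq_mul_log_sub_log_of_eq_mul_exp {η κ φ w : ℝ} (hη : η ≠ 0) (hκ : 0 < κ)
    (hw : w = κ * exp (-φ / η)) :
    φ = η * (log κ - log w) := by
  rw [hw, log_mul hκ.ne' (exp_ne_zero _), log_exp]
  field_simp
  ring

theorem sum_gibbs_mul_sub_iInf_le {ι : Type*} [Fintype ι] {η : ℝ} (hη : 0 < η)
    {κ φ w : ι → ℝ} (hκ : ∀ p, 0 < κ p) (hw : ∀ p, w p = κ p * exp (-φ p / η))
    (hw1 : ∑ p, w p = 1) :
    ∑ p, w p * (φ p - ⨅ q, φ q)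
      ≤ η * (log (Fintype.card ι) + ((⨆ p, log (κ p)) - ⨅ p, log (κ p))) := by
  have hwpos : ∀ p, 0 < w p := fun p => (hw p).symm ▸ mul_pos (hκ p) (exp_pos _)
  have hwle : ∀ p, w p ≤ 1 := fun p =>
    hw1 ▸ Finset.single_le_sum (fun q _ => (hwpos q).le) (Finset.mem_univ p)
  have hφ : ∀ p, φ p = η * (log (κ p) - log (w p)) := fun p =>
    eq_mul_log_sub_log_of_eq_mul_exp hη.ne' (hκ p) (hw p)
  have hmin : η * ⨅ p, log (κ p) ≤ ⨅ q, φ q := by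
    rw [mul_iInf_of_nonneg hη.le]
    refine ciInf_mono (Set.finite_range _).bddBelow fun p => ?_
    rw [hφ p]
    nlinarith [log_nonpos (hwpos p).le (hwle p)]
  have hmax : ∑ p, w p * log (κ p) ≤ ⨆ p, log (κ p) := by
    calc ∑ p, w p * log (κ p) ≤ ∑ p, w p * ⨆ q, log (κ q) :=
          Finset.sum_le_sum fun p _ => mul_le_mul_of_nonneg_left
            (le_ciSup (f := fun q => log (κ q)) (Set.finite_range _).bddAbove p) (hwpos p).le
      _ = ⨆ q, log (κ q) := by rw [← Finset.sum_mul, hw1, one_mul]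
  have hent := sum_mul_neg_log_le_log_card hwpos hw1
  set m := ⨅ q, φ q
  have hsplit : ∑ p, w p * (φ p - m)
      = η * ∑ p, w p * log (κ p) + η * ∑ p, w p * -log (w p) - m := by
    calc ∑ p, w p * (φ p - m)
        = ∑ p, (η * (w p * log (κ p)) + η * (w p * -log (w p))) - ∑ p, w p * m := by
          rw [← Finset.sum_sub_distrib]
          exact Finset.sum_congr rfl fun p _ => by rw [hφ p]; ring
      _ = η * ∑ p, w p * log (κ p) + η * ∑ p, w p * -log (w p) - m := by
          rw [← Finset.sum_mul, hw1, Finset.sum_add_distrib, Finset.mul_sum, Finset.mul_sum]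
          ring
  rw [hsplit]
  linarith [mul_le_mul_of_nonneg_left hmax hη.le, mul_le_mul_of_nonneg_left hent hη.le]

theorem statement17_general (n d k : ℕ) (η : ℝ) (hη : 0 < η)
    (κ : Matrix (Fin n) (Fin n) ℝ) (hκ : ∀ i j, 0 < κ i j)
    (x y : Fin n → Fin d → ℝ) (α β : Fin n → ℝ) (U : Matrix (Fin d) (Fin k) ℝ)
    (hζ : l1norm (zeta η κ x y α β U) = 1) :
    (∑ i, ∑ j, piEta η κ x y α β U i j * (phi x y α β U i j - phiMin x y α β U))
      ≤ η * (2 * Real.log n + varLog κ) := by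
  have hζpos : ∀ i j, 0 < zeta η κ x y α β U i j := fun i j => mul_pos (hκ i j) (exp_pos _)
  have hπ1 : ∑ p : Fin n × Fin n, zeta η κ x y α β U p.1 p.2 = 1 := by
    rw [← hζ, l1norm, Fintype.sum_prod_type]
    simp only [abs_of_pos (hζpos _ _)]
  have hlog_card : log (Fintype.card (Fin n × Fin n)) = 2 * log n := by
    rw [Fintype.card_prod, Fintype.card_fin, ← sq, Nat.cast_pow, log_pow, Nat.cast_ofNat]
  have hgibbs := sum_gibbs_mul_sub_iInf_le hη (κ := fun p : Fin n × Fin n => κ p.1 p.2)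
    (φ := fun p => phi x y α β U p.1 p.2) (w := fun p => zeta η κ x y α β U p.1 p.2)
    (fun p => hκ p.1 p.2) (fun p => rfl) hπ1
  rw [hlog_card, Fintype.sum_prod_type] at hgibbs
  simpa only [piEta, hζ, div_one, phiMin, varLog] using hgibbs

/-- the complementarity estimate
`⟨π_η(x̃,κ), Z(x̃)⟩ ≤ η (2 log n + ‖log κ‖_var)` when `‖ζ_η(x̃,κ)‖₁ = 1`. -/
theorem statement17 (n d k : ℕ) (hn : 1 ≤ n) (η : ℝ) (hη : 0 < η)
    (κ : Matrix (Fin n) (Fin n) ℝ) (hκ : ∀ i j, 0 < κ i j)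
    (x y : Fin n → Fin d → ℝ) (α β : Fin n → ℝ) (U : Matrix (Fin d) (Fin k) ℝ)
    (hζ : l1norm (zeta η κ x y α β U) = 1) :
    (∑ i, ∑ j, piEta η κ x y α β U i j * (phi x y α β U i j - phiMin x y α β U))
      ≤ η * (2 * Real.log n + varLog κ) :=
  statement17_general n d k η hη κ hκ x y α β U hζ

end PRWPaper
end
end
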